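/- Let H be a connected graph and let H' be obtained from H by adding four new vertices x, u_1, v_1, x_1 together with the following new edges: a u_1, u_1 x, x v_1, v_1 b, where a and b are distinct vertices of H; an edge e_0 joining x to a vertex of H; and three edges e_0', e_1', e_2' joining x_1 to three distinct vertices of H. Then rc(H') ≤ rc(H) + 2. -/

import Mathlib

/-!
Colour `H` rainbow with `k = rc H` colours and give the new edges two fresh colours: `k + 1` on
`a u₁, u₁ x, v₁ b, x c` and `k` on `x v₁` and on the three edges at `x₁`. A new vertex reaches `H`
by one fresh edge followed by a rainbow path of `H`, the path `u₁ x v₁` is rainbow, and `x₁` is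
reached from `u₁, x, v₁` through `H` and `d 0`, leaving and entering with different fresh colours.

Since `rc` is `0` when there is no rainbow colouring at all, a rainbow colouring of `H'` must also
yield one of `H`: replace every excursion of a rainbow path outside `H` by a fixed walk of `H`
between the finitely many attachment vertices, and give the edges of these fixed walks pairwise
distinct fresh colours.
-/

open SimpleGraph

/-- The rainbow connection number of a graph `G`: the least `k` such that the edges of `G`
can be coloured with colours `0, …, k-1` so that any two distinct vertices are joined by a
path whose edges receive pairwise distinct colours. -/
noncomputable def rc {V : Type*} (G : SimpleGraph V) : ℕ :=
  sInf {k : ℕ | ∃ c : Sym2 V → ℕ, (∀ e ∈ G.edgeSet, c e < k) ∧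
    ∀ u v : V, u ≠ v → ∃ p : G.Walk u v, p.IsPath ∧ (p.edges.map c).Nodup}

lemma List.nodup_cons_of_forall_lt {k x : ℕ} {l : List ℕ} (hl : l.Nodup) (hlt : ∀ y ∈ l, y < k)
    (hx : k ≤ x) : (x :: l).Nodup :=
  List.nodup_cons.mpr ⟨fun hxl => (hlt x hxl).not_ge hx, hl⟩

lemma List.nodup_cons_append_singleton {k x y : ℕ} {l : List ℕ} (hl : l.Nodup)
    (hlt : ∀ z ∈ l, z < k) (hx : k ≤ x) (hy : k ≤ y) (hxy : x ≠ y) : (x :: (l ++ [y])).Nodup := by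
  simpa [List.nodup_append, hl] using ⟨⟨fun h => (hlt x h).not_ge hx, hxy⟩,
    fun z hz (hzy : z = y) => (hlt z hz).not_ge (hzy ▸ hy)⟩

lemma List.injOn_ite_idxOf {α : Type*} [DecidableEq α] {k : ℕ} {L : List α} {S : Set α} {f : α → ℕ}
    (hlt : ∀ e ∈ S, e ∉ L → f e < k) (hinj : Set.InjOn f {e ∈ S | e ∉ L}) :
    Set.InjOn (fun e => if e ∈ L then k + L.idxOf e else f e) S := by
  intro e he e' he' hee'
  by_cases heL : e ∈ L <;> by_cases he'L : e' ∈ L <;>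
    simp only [heL, he'L, if_true, if_false] at hee'
  · exact (List.idxOf_inj heL).mp (by omega)
  · exact absurd hee' (by have := hlt e' he' he'L; omega)
  · exact absurd hee' (by have := hlt e he heL; omega)
  · exact hinj ⟨he, heL⟩ ⟨he', he'L⟩ hee'

namespace SimpleGraph

variable {V β : Type*}

def IsRainbowColoring (G : SimpleGraph V) (k : ℕ) (c : Sym2 V → ℕ) : Prop :=
  (∀ e ∈ G.edgeSet, c e < k) ∧
    ∀ u v : V, u ≠ v → ∃ p : G.Walk u v, p.IsPath ∧ (p.edges.map c).Nodup

variable {G : SimpleGraph V} {k : ℕ} {c : Sym2 V → ℕ}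

lemma rc_le_of_isRainbowColoring (h : G.IsRainbowColoring k c) : rc G ≤ k :=
  Nat.sInf_le ⟨c, h⟩

lemma exists_isRainbowColoring_rc (h : ∃ k c, G.IsRainbowColoring k c) :
    ∃ c, G.IsRainbowColoring (rc G) c :=
  Nat.sInf_mem h

lemma rc_eq_zero_of_not_exists_isRainbowColoring (h : ¬∃ k c, G.IsRainbowColoring k c) :
    rc G = 0 :=
  Nat.sInf_eq_zero.mpr (.inr (Set.not_nonempty_iff_eq_empty.mp h))

lemma exists_isPath_nodup_of_injOn {u v : V} (w : G.Walk u v)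
    (hw : Set.InjOn c {e | e ∈ w.edges}) :
    ∃ p : G.Walk u v, p.IsPath ∧ (p.edges.map c).Nodup := by
  classical
  exact ⟨w.bypass, w.bypass_isPath, w.bypass_isPath.edges_nodup.map_on
    fun _ he _ hf => hw (w.edges_bypass_subset_edges he) (w.edges_bypass_subset_edges hf)⟩

lemma IsRainbowColoring.of_forall_walk (hlt : ∀ e ∈ G.edgeSet, c e < k)
    (hw : ∀ u v : V, ∃ w : G.Walk u v, (w.edges.map c).Nodup) : G.IsRainbowColoring k c := by
  classical
  refine ⟨hlt, fun u v _ => ?_⟩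
  obtain ⟨w, hw⟩ := hw u v
  exact ⟨w.bypass, w.bypass_isPath, hw.sublist (w.edges_bypass_sublist_edges.map c)⟩

lemma IsRainbowColoring.exists_walk (hc : G.IsRainbowColoring k c) (u v : V) :
    ∃ w : G.Walk u v, (w.edges.map c).Nodup ∧ ∀ z ∈ w.edges.map c, z < k := by
  by_cases huv : u = v
  · exact huv ▸ ⟨.nil, by simp⟩
  obtain ⟨w, -, hw⟩ := hc.2 u v huv
  refine ⟨w, hw, ?_⟩
  simpa using fun e he => hc.1 e (w.edges_subset_edgeSet he)

lemma exists_walk_nodup_reverse {u v : V} (h : ∃ w : G.Walk u v, (w.edges.map c).Nodup) :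
    ∃ w : G.Walk v u, (w.edges.map c).Nodup :=
  let ⟨w, hw⟩ := h; ⟨w.reverse, by simpa [Walk.edges_reverse] using hw⟩

section Sum

open Sum

variable {H : SimpleGraph V} {G : SimpleGraph (V ⊕ β)} (A : Finset V)

lemma exists_walk_of_walk_sum (hinl : ∀ p q, G.Adj (inl p) (inl q) → H.Adj p q)
    (hA : ∀ p i, G.Adj (inl p) (inr i) → p ∈ A) (T : ∀ p q : V, H.Walk p q) :
    ∀ {s t : V ⊕ β} (Q : G.Walk s t) {p q : V}, (s = inl p ∨ (∃ i, s = inr i) ∧ p ∈ A) →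
      t = inl q → ∃ w : H.Walk p q, ∀ e ∈ w.edges,
        Sym2.map inl e ∈ Q.edges ∨ ∃ p' ∈ A, ∃ q' ∈ A, e ∈ (T p' q').edges := by
  -- `p` is the last vertex of `H` visited so far; outside `H` it is in `A`.
  intro s t Q
  induction Q with
  | nil =>
    rintro p q (hs | ⟨⟨i, hs⟩, -⟩) rfl
    · cases hs
      exact ⟨.nil, by simp⟩
    · cases hs
  | @cons s v t h Q ih =>
    intro p q hs ht
    have lift : ∀ w : H.Walk p q, (∀ e ∈ w.edges,
        Sym2.map inl e ∈ Q.edges ∨ ∃ p' ∈ A, ∃ q' ∈ A, e ∈ (T p' q').edges) → ∀ e ∈ w.edges,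
        Sym2.map inl e ∈ (Walk.cons h Q).edges ∨ ∃ p' ∈ A, ∃ q' ∈ A, e ∈ (T p' q').edges :=
      fun w hw e he => (hw e he).imp_left (List.mem_cons_of_mem _)
    rcases s with p₀ | i <;> rcases v with p₁ | j
    · obtain rfl : p₀ = p := by simpa using hs
      obtain ⟨w, hw⟩ := ih (.inl rfl) ht
      refine ⟨.cons (hinl _ _ h) w, fun e he => ?_⟩
      rcases List.mem_cons.mp (Walk.edges_cons _ _ ▸ he) with rfl | he
      · exact .inl (by simp)
      · exact (hw e he).imp_left (List.mem_cons_of_mem _)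
    · obtain rfl : p₀ = p := by simpa using hs
      obtain ⟨w, hw⟩ := ih (.inr ⟨⟨j, rfl⟩, hA _ _ h⟩) ht
      exact ⟨w, lift w hw⟩
    · have hp : p ∈ A := by simpa using hs
      obtain ⟨w, hw⟩ := ih (.inl rfl) ht
      refine ⟨(T p p₁).append w, fun e he => ?_⟩
      rcases List.mem_append.mp (Walk.edges_append _ _ ▸ he) with he | he
      · exact .inr ⟨p, hp, p₁, hA _ _ h.symm, he⟩
      · exact (hw e he).imp_left (List.mem_cons_of_mem _)
    · have hp : p ∈ A := by simpa using hs
      obtain ⟨w, hw⟩ := ih (.inr ⟨⟨j, rfl⟩, hp⟩) ht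
      exact ⟨w, lift w hw⟩

lemma exists_isRainbowColoring_of_sum (hH : H.Connected)
    (hadj : ∀ p q, G.Adj (inl p) (inl q) ↔ H.Adj p q)
    (hA : ∀ p i, G.Adj (inl p) (inr i) → p ∈ A) {c : Sym2 (V ⊕ β) → ℕ}
    (hc : G.IsRainbowColoring k c) : ∃ m c₀, H.IsRainbowColoring m c₀ := by
  classical
  let T p q : H.Walk p q := (hH.preconnected p q).some
  let L : List (Sym2 V) := A.toList.flatMap fun p => A.toList.flatMap fun q => (T p q).edges
  have hL : ∀ p ∈ A, ∀ q ∈ A, ∀ e ∈ (T p q).edges, e ∈ L := fun p hp q hq e he => by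
    simpa [L] using ⟨p, hp, q, hq, he⟩
  have hmap : ∀ e ∈ H.edgeSet, Sym2.map inl e ∈ G.edgeSet := fun e he => by
    induction e using Sym2.ind with
    | _ p q => simpa [hadj] using he
  refine ⟨k + L.length, fun e => if e ∈ L then k + L.idxOf e else c (Sym2.map inl e),
    fun e he => ?_, fun u v huv => ?_⟩
  · by_cases heL : e ∈ L
    · simpa [heL] using List.idxOf_lt_length_iff.mpr heL
    · simpa [heL] using Nat.lt_add_right _ (hc.1 _ (hmap e he))
  obtain ⟨Q, -, hQ⟩ := hc.2 (inl u) (inl v) (by simpa using huv)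
  obtain ⟨w, hw⟩ :=
    exists_walk_of_walk_sum A (fun p q => (hadj p q).mp) hA T Q (.inl rfl) rfl
  have hwQ : ∀ e ∈ w.edges, e ∉ L → Sym2.map inl e ∈ Q.edges := fun e he heL =>
    (hw e he).resolve_right fun ⟨p, hp, q, hq, heT⟩ => heL (hL p hp q hq e heT)
  refine exists_isPath_nodup_of_injOn w (List.injOn_ite_idxOf (fun e he heL => ?_) ?_)
  · exact hc.1 _ (Q.edges_subset_edgeSet (hwQ e he heL))
  · rintro e ⟨he, heL⟩ e' ⟨he', he'L⟩ hee'
    exact Sym2.map.injective inl_injective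
      (List.inj_on_of_nodup_map hQ (hwQ e he heL) (hwQ e' he' he'L) hee')

end Sum

end SimpleGraph

namespace Subcase11

open Sum

variable {V : Type*}

-- The new vertices `x, u₁, v₁, x₁` are `inr 0, inr 1, inr 2, inr 3`.
def graph (H : SimpleGraph V) (a b c : V) (d : Fin 3 → V) : SimpleGraph (V ⊕ Fin 4) :=
  fromRel fun u v =>
    (∃ p q, u = inl p ∧ v = inl q ∧ H.Adj p q) ∨
    (u = inl a ∧ v = inr 1) ∨
    (u = inr 1 ∧ v = inr 0) ∨
    (u = inr 0 ∧ v = inr 2) ∨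
    (u = inr 2 ∧ v = inl b) ∨
    (u = inr 0 ∧ v = inl c) ∨
    (∃ j, u = inr 3 ∧ v = inl (d j))

variable {H : SimpleGraph V} {a b c : V} {d : Fin 3 → V}

@[simp] lemma graph_adj_inl_inl {p q : V} : (graph H a b c d).Adj (inl p) (inl q) ↔ H.Adj p q := by
  simpa [graph, H.adj_comm q p] using fun h : H.Adj p q => h.ne

@[simp] lemma graph_adj_inl_inr {p : V} {i : Fin 4} :
    (graph H a b c d).Adj (inl p) (inr i) ↔
      p = a ∧ i = 1 ∨ i = 2 ∧ p = b ∨ i = 0 ∧ p = c ∨ i = 3 ∧ ∃ j, p = d j := by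
  simp [graph]

def anchor (a b c : V) (d : Fin 3 → V) : Fin 4 → V := ![c, a, b, d 0]

lemma graph_adj_anchor (i : Fin 4) : (graph H a b c d).Adj (inr i) (inl (anchor a b c d i)) := by
  rw [adj_comm]
  fin_cases i <;> simp [anchor]

def coloring (c₀ : Sym2 V → ℕ) (k : ℕ) : Sym2 (V ⊕ Fin 4) → ℕ :=
  Sym2.lift ⟨fun u v => match u, v with
    | inl p, inl q => c₀ s(p, q)
    | inl _, inr i | inr i, inl _ => if i = 3 then k else k + 1
    | inr i, inr j => if i = 1 ∨ j = 1 then k + 1 else k, by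
    rintro (p | i) (q | j) <;> simp [Sym2.eq_swap, or_comm]⟩

variable {c₀ : Sym2 V → ℕ} {k : ℕ}

@[simp] lemma coloring_map_inl (e : Sym2 V) : coloring c₀ k (Sym2.map inl e) = c₀ e := by
  induction e using Sym2.ind with
  | _ p q => rfl

@[simp] lemma coloring_inr_inl (i : Fin 4) (p : V) :
    coloring c₀ k s(inr i, inl p) = if i = 3 then k else k + 1 := rfl

@[simp] lemma coloring_inl_inr (p : V) (i : Fin 4) :
    coloring c₀ k s(inl p, inr i) = if i = 3 then k else k + 1 := rfl

@[simp] lemma coloring_inr_inr (i j : Fin 4) :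
    coloring c₀ k s(inr i, inr j) = if i = 1 ∨ j = 1 then k + 1 else k := rfl

lemma coloring_lt (hc₀ : ∀ e ∈ H.edgeSet, c₀ e < k) :
    ∀ e ∈ (graph H a b c d).edgeSet, coloring c₀ k e < k + 2 := by
  intro e he
  induction e using Sym2.ind with
  | _ u v =>
    rcases u with p | i <;> rcases v with q | j
    · have := hc₀ s(p, q) (graph_adj_inl_inl.mp he)
      simp only [coloring, Sym2.lift_mk]
      omega
    all_goals simp only [coloring, Sym2.lift_mk]; split_ifs <;> omega

lemma exists_walk_inl_inl (hc₀ : H.IsRainbowColoring k c₀) (p q : V) :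
    ∃ w : (graph H a b c d).Walk (inl p) (inl q), (w.edges.map (coloring c₀ k)).Nodup ∧
      ∀ z ∈ w.edges.map (coloring c₀ k), z < k := by
  obtain ⟨w, hw⟩ := hc₀.exists_walk p q
  refine ⟨w.map ⟨inl, graph_adj_inl_inl.mpr⟩, ?_⟩
  simpa [Walk.edges_map, Function.comp_def] using hw

lemma exists_walk_inr_inl (hc₀ : H.IsRainbowColoring k c₀) (i : Fin 4) (q : V) :
    ∃ w : (graph H a b c d).Walk (inr i) (inl q), (w.edges.map (coloring c₀ k)).Nodup := by
  obtain ⟨w, hw, hlt⟩ := exists_walk_inl_inl hc₀ (anchor a b c d i) q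
  refine ⟨.cons (graph_adj_anchor i) w, ?_⟩
  rw [Walk.edges_cons, List.map_cons]
  exact List.nodup_cons_of_forall_lt hw hlt (by rw [coloring_inr_inl]; split_ifs <;> omega)

lemma exists_walk_inr_three (hc₀ : H.IsRainbowColoring k c₀) {i : Fin 4} (hi : i ≠ 3) :
    ∃ w : (graph H a b c d).Walk (inr i) (inr 3), (w.edges.map (coloring c₀ k)).Nodup := by
  obtain ⟨w, hw, hlt⟩ := exists_walk_inl_inl hc₀ (anchor a b c d i) (anchor a b c d 3)
  refine ⟨.cons (graph_adj_anchor i) (w.append (.cons (graph_adj_anchor 3).symm .nil)), ?_⟩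
  simp only [Walk.edges_cons, Walk.edges_append, List.map_cons, List.map_append]
  exact List.nodup_cons_append_singleton hw hlt (by simp [hi]) (by simp) (by simp [hi])

lemma exists_walk_inr_inr (hc₀ : H.IsRainbowColoring k c₀) {i j : Fin 4} (hij : i < j) :
    ∃ w : (graph H a b c d).Walk (inr i) (inr j), (w.edges.map (coloring c₀ k)).Nodup := by
  rcases eq_or_ne j 3 with rfl | hj
  · exact exists_walk_inr_three hc₀ hij.ne
  have h01 : (graph H a b c d).Adj (inr 0) (inr 1) := by simp [graph]
  have h02 : (graph H a b c d).Adj (inr 0) (inr 2) := by simp [graph]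
  have w01 : ∃ w : (graph H a b c d).Walk (inr 0) (inr 1), (w.edges.map (coloring c₀ k)).Nodup :=
    ⟨.cons h01 .nil, by simp⟩
  have w02 : ∃ w : (graph H a b c d).Walk (inr 0) (inr 2), (w.edges.map (coloring c₀ k)).Nodup :=
    ⟨.cons h02 .nil, by simp⟩
  have w12 : ∃ w : (graph H a b c d).Walk (inr 1) (inr 2), (w.edges.map (coloring c₀ k)).Nodup :=
    ⟨.cons h01.symm (.cons h02 .nil), by simp⟩
  fin_cases i <;> fin_cases j <;>
    first | assumption | exact absurd hij (by decide) | exact absurd rfl hj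

lemma isRainbowColoring_coloring (hc₀ : H.IsRainbowColoring k c₀) :
    (graph H a b c d).IsRainbowColoring (k + 2) (coloring c₀ k) := by
  refine .of_forall_walk (coloring_lt hc₀.1) fun u v => ?_
  rcases u with p | i <;> rcases v with q | j
  · exact (exists_walk_inl_inl hc₀ p q).imp fun _ => And.left
  · exact exists_walk_nodup_reverse (exists_walk_inr_inl hc₀ j p)
  · exact exists_walk_inr_inl hc₀ i q
  · rcases lt_trichotomy i j with hij | rfl | hji
    · exact exists_walk_inr_inr hc₀ hij
    · exact ⟨.nil, by simp⟩
    · exact exists_walk_nodup_reverse (exists_walk_inr_inr hc₀ hji)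

lemma exists_isRainbowColoring_of_graph (hH : H.Connected) {c' : Sym2 (V ⊕ Fin 4) → ℕ}
    (hc' : (graph H a b c d).IsRainbowColoring k c') : ∃ m c₀, H.IsRainbowColoring m c₀ := by
  classical
  refine exists_isRainbowColoring_of_sum ({a, b, c} ∪ Finset.univ.image d) hH
    (fun _ _ => graph_adj_inl_inl) (fun p i h => ?_) hc'
  obtain ⟨rfl, -⟩ | ⟨-, rfl⟩ | ⟨-, rfl⟩ | ⟨-, j, rfl⟩ := graph_adj_inl_inr.mp h <;> simp

end Subcase11

theorem rc_subcase11_general {V : Type*} (H : SimpleGraph V) (hH : H.Connected)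
    (a b c : V) (d : Fin 3 → V) :
    rc (SimpleGraph.fromRel (fun u v : V ⊕ Fin 4 =>
        (∃ p q, u = Sum.inl p ∧ v = Sum.inl q ∧ H.Adj p q) ∨
        (u = Sum.inl a ∧ v = Sum.inr 1) ∨
        (u = Sum.inr 1 ∧ v = Sum.inr 0) ∨
        (u = Sum.inr 0 ∧ v = Sum.inr 2) ∨
        (u = Sum.inr 2 ∧ v = Sum.inl b) ∨
        (u = Sum.inr 0 ∧ v = Sum.inl c) ∨
        (∃ j, u = Sum.inr 3 ∧ v = Sum.inl (d j)))) ≤ rc H + 2 := by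
  change rc (Subcase11.graph H a b c d) ≤ rc H + 2
  by_cases hG : ∃ k c', (Subcase11.graph H a b c d).IsRainbowColoring k c'
  · obtain ⟨k, c', hc'⟩ := hG
    obtain ⟨c₀, hc₀⟩ :=
      exists_isRainbowColoring_rc (Subcase11.exists_isRainbowColoring_of_graph hH hc')
    exact rc_le_of_isRainbowColoring (Subcase11.isRainbowColoring_coloring hc₀)
  · exact (rc_eq_zero_of_not_exists_isRainbowColoring hG).trans_le (Nat.zero_le _)

/-- Subcase 1.1.  Add new vertices `x = Sum.inr 0`, `u₁ = Sum.inr 1`, `v₁ = Sum.inr 2`,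
`x₁ = Sum.inr 3` to a connected graph `H`, with edges `a u₁, u₁ x, x v₁, v₁ b` for
distinct `a, b ∈ H`, an edge `e₀` joining `x` to a vertex `c` of `H`, and three edges
joining `x₁` to three distinct vertices `d 0, d 1, d 2` of `H`.  Then
`rc(H') ≤ rc(H) + 2`. -/
theorem rc_subcase11 {V : Type*} (H : SimpleGraph V) (hH : H.Connected)
    (a b c : V) (hab : a ≠ b) (d : Fin 3 → V) (hd : Function.Injective d) :
    rc (SimpleGraph.fromRel (fun u v : V ⊕ Fin 4 =>
        (∃ p q, u = Sum.inl p ∧ v = Sum.inl q ∧ H.Adj p q) ∨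
        (u = Sum.inl a ∧ v = Sum.inr 1) ∨
        (u = Sum.inr 1 ∧ v = Sum.inr 0) ∨
        (u = Sum.inr 0 ∧ v = Sum.inr 2) ∨
        (u = Sum.inr 2 ∧ v = Sum.inl b) ∨
        (u = Sum.inr 0 ∧ v = Sum.inl c) ∨
        (∃ j, u = Sum.inr 3 ∧ v = Sum.inl (d j)))) ≤ rc H + 2 :=
  rc_subcase11_general H hH a b c d
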